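/- Define eight polynomials in ℝ[s,t]: β_{(0,0)} = 3(2−s)²(3−s−t)³(2−t)², β_{(1,0)} = 5(2−s)(3−s−t)²(2−t)²·s·(3−s−t/2), β_{(0,1)} = 5(3−s/2−t)·t·(2−s)²(3−s−t)²(2−t), β_{(1,1)} = 7(3−s/2−t)·t·(2−t)(3−s−t)(2−s)·s·(3−s−t/2), β_{(2,0)} = 2(3−s−t)(2−t)²s²(3−s−t/2)², β_{(0,2)} = 2(3−s/2−t)²t²(2−s)²(3−s−t), β_{(2,1)} = 2(3−s/2−t)·t·(2−t)·s²(3−s−t/2)², β_{(1,2)} = 2(3−s/2−t)²t²(2−s)·s·(3−s−t/2), and let the points be b_{(0,0)}=(0,0), b_{(1,0)}=(6/5,0), b_{(0,1)}=(0,6/5), b_{(1,1)}=(8/7,8/7), b_{(2,0)}=(2,0), b_{(0,2)}=(0,2), b_{(2,1)}=(2,1), b_{(1,2)}=(1,2). Then the identity Σ_a β_a(s,t)·b_a = (Σ_a β_a(s,t))·(s,t) holds in ℝ[s,t]² ; that is, these modified toric Bézier functions, after normalization, have linear precision with respect to the points b_a. -/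
import Mathlib


open MvPolynomial

/-! Krasauskas's modified toric Bézier functions for the pentagonal M-patch,
as polynomials in `ℝ[s,t]` with `s = X 0`, `t = X 1`. -/

/-- `β_{(0,0)} = 3(2−s)²(3−s−t)³(2−t)²`. -/
noncomputable def pentB00 : MvPolynomial (Fin 2) ℝ :=
  C 3 * (C 2 - X 0) ^ 2 * (C 3 - X 0 - X 1) ^ 3 * (C 2 - X 1) ^ 2

/-- `β_{(1,0)} = 5(2−s)(3−s−t)²(2−t)²·s·(3−s−t/2)`. -/
noncomputable def pentB10 : MvPolynomial (Fin 2) ℝ :=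
  C 5 * (C 2 - X 0) * (C 3 - X 0 - X 1) ^ 2 * (C 2 - X 1) ^ 2 * X 0 *
    (C 3 - X 0 - C (1/2) * X 1)

/-- `β_{(0,1)} = 5(3−s/2−t)·t·(2−s)²(3−s−t)²(2−t)`. -/
noncomputable def pentB01 : MvPolynomial (Fin 2) ℝ :=
  C 5 * (C 3 - C (1/2) * X 0 - X 1) * X 1 * (C 2 - X 0) ^ 2 * (C 3 - X 0 - X 1) ^ 2 *
    (C 2 - X 1)

/-- `β_{(1,1)} = 7(3−s/2−t)·t·(2−t)(3−s−t)(2−s)·s·(3−s−t/2)`. -/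
noncomputable def pentB11 : MvPolynomial (Fin 2) ℝ :=
  C 7 * (C 3 - C (1/2) * X 0 - X 1) * X 1 * (C 2 - X 1) * (C 3 - X 0 - X 1) *
    (C 2 - X 0) * X 0 * (C 3 - X 0 - C (1/2) * X 1)

/-- `β_{(2,0)} = 2(3−s−t)(2−t)²s²(3−s−t/2)²`. -/
noncomputable def pentB20 : MvPolynomial (Fin 2) ℝ :=
  C 2 * (C 3 - X 0 - X 1) * (C 2 - X 1) ^ 2 * X 0 ^ 2 * (C 3 - X 0 - C (1/2) * X 1) ^ 2

/-- `β_{(0,2)} = 2(3−s/2−t)²t²(2−s)²(3−s−t)`. -/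
noncomputable def pentB02 : MvPolynomial (Fin 2) ℝ :=
  C 2 * (C 3 - C (1/2) * X 0 - X 1) ^ 2 * X 1 ^ 2 * (C 2 - X 0) ^ 2 * (C 3 - X 0 - X 1)

/-- `β_{(2,1)} = 2(3−s/2−t)·t·(2−t)·s²(3−s−t/2)²`. -/
noncomputable def pentB21 : MvPolynomial (Fin 2) ℝ :=
  C 2 * (C 3 - C (1/2) * X 0 - X 1) * X 1 * (C 2 - X 1) * X 0 ^ 2 *
    (C 3 - X 0 - C (1/2) * X 1) ^ 2

/-- `β_{(1,2)} = 2(3−s/2−t)²t²(2−s)·s·(3−s−t/2)`. -/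
noncomputable def pentB12 : MvPolynomial (Fin 2) ℝ :=
  C 2 * (C 3 - C (1/2) * X 0 - X 1) ^ 2 * X 1 ^ 2 * (C 2 - X 0) * X 0 *
    (C 3 - X 0 - C (1/2) * X 1)

/-- With the tuned points `b_{(0,0)}=(0,0)`, `b_{(1,0)}=(6/5,0)`,
`b_{(0,1)}=(0,6/5)`, `b_{(1,1)}=(8/7,8/7)`, `b_{(2,0)}=(2,0)`, `b_{(0,2)}=(0,2)`,
`b_{(2,1)}=(2,1)`, `b_{(1,2)}=(1,2)`, Krasauskas's modified toric Bézier functions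
satisfy `∑_a β_a(s,t) • b_a = (∑_a β_a(s,t)) • (s,t)` identically in `ℝ[s,t]²`;
i.e. after normalization they have linear precision with respect to the `b_a`. -/
theorem pentagon_modified_toric_Bezier_linear_precision :
    (pentB00 * C 0 + pentB10 * C (6/5) + pentB01 * C 0 + pentB11 * C (8/7) +
        pentB20 * C 2 + pentB02 * C 0 + pentB21 * C 2 + pentB12 * C 1 =
      (pentB00 + pentB10 + pentB01 + pentB11 + pentB20 + pentB02 + pentB21 + pentB12) *
        X 0) ∧
    (pentB00 * C 0 + pentB10 * C 0 + pentB01 * C (6/5) + pentB11 * C (8/7) +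
        pentB20 * C 0 + pentB02 * C 2 + pentB21 * C 1 + pentB12 * C 2 =
      (pentB00 + pentB10 + pentB01 + pentB11 + pentB20 + pentB02 + pentB21 + pentB12) *
        X 1) := by
  constructor <;>
  · apply MvPolynomial.funext
    intro x
    simp only [pentB00, pentB10, pentB01, pentB11, pentB20, pentB02, pentB21, pentB12,
      map_add, map_mul, map_sub, map_pow, eval_C, eval_X]
    ring
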